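/- Let V be a real vector space with a symmetric bilinear form B. Let the vectors e_i be grouped into m disjoint chains, the j-th chain consisting of k_j vectors forming the A_{k_j} intersection matrix (B = −2 on each vector with itself, 1 between consecutive vectors of the same chain, 0 between all other pairs), so that the total Gram matrix is block diagonal with A_{k_j} blocks. Let c̃ ∈ V satisfy B(c̃, e) = 1 when e is the first vector of a chain and B(c̃, e) = 0 for all other e_i. If c = c̃ + Σ a_j e_j is the unique vector of this form with B(c, e_i) = 0 for all i, then B(c, c) = B(c̃, c̃) + Σ_{j=1}^{m} k_j/(k_j + 1). -/

import Mathlib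

/-! Pair `c` with `w_j = Σ_i (k_j - i) e_{j,i}`. In the `A_k` Gram matrix the weight vector
`(k, k-1, …, 1)` is mapped to `(-(k+1), 0, …, 0)`, so `B(e_{j,i}, w_j) = -(k_j+1) δ_{i,0}`, and
`B(e_{j',i}, w_j) = 0` for `j' ≠ j`. Since `B(ct, w_j) = k_j` and `c ⊥ w_j`, this gives
`0 = k_j - (k_j+1) a_{j,0}`. On the other hand `c ⊥ e_{j,i}` gives
`B(c, c) = B(ct, c) = B(ct, ct) + Σ_j a_{j,0}`. -/

open Finset Matrix

def chainGram (n : ℕ) : Matrix (Fin n) (Fin n) ℝ :=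
  of fun i i' => if i = i' then -2 else if (i : ℕ) + 1 = i' ∨ (i' : ℕ) + 1 = i then 1 else 0

def chainWeight (n : ℕ) (i : Fin n) : ℝ := n - i

lemma sum_fin_ite_val_eq (n t : ℕ) (f : ℕ → ℝ) :
    ∑ i : Fin n, (if (i : ℕ) = t then f i else 0) = if t < n then f t else 0 := by
  rw [Fin.sum_univ_eq_sum_range (fun i => if i = t then f i else 0), sum_ite_eq']
  simp only [mem_range]

lemma chainGram_mulVec_chainWeight (n : ℕ) (i : Fin n) :
    (chainGram n *ᵥ chainWeight n) i = if (i : ℕ) = 0 then -((n : ℝ) + 1) else 0 := by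
  set w : ℕ → ℝ := fun t => n - t
  have hsplit : ∀ i', chainGram n i i' * chainWeight n i' =
      (if (i' : ℕ) = i then -2 * w i' else 0) + (if (i' : ℕ) = i + 1 then w i' else 0) +
        if (i' : ℕ) = i - 1 then (if (i : ℕ) = 0 then 0 else w i') else 0 := by
    intro i'
    simp only [chainGram, of_apply, chainWeight, w, Fin.ext_iff]
    split_ifs <;> first | (exfalso; omega) | ring
  simp only [mulVec, dotProduct, hsplit, sum_add_distrib]
  rw [sum_fin_ite_val_eq n i (fun t => -2 * w t), sum_fin_ite_val_eq n (i + 1) w,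
    sum_fin_ite_val_eq n (i - 1) (fun t => if (i : ℕ) = 0 then 0 else w t)]
  have hi := i.isLt
  -- the neighbour `i + 1` may fall off the chain, but there the weight `n - (i + 1)` is `0`
  have hnext : (if (i : ℕ) + 1 < n then w (i + 1) else 0) = w (i + 1) := by
    split_ifs with h
    · rfl
    · simp [w, show (i : ℕ) + 1 = n by omega]
  rw [if_pos hi, hnext, if_pos (by omega : (i : ℕ) - 1 < n)]
  obtain h0 | ⟨s, hs⟩ : (i : ℕ) = 0 ∨ ∃ s, (i : ℕ) = s + 1 := by
    rcases (i : ℕ) with _ | s <;> simp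
  · simp only [h0, if_true, w]
    push_cast
    ring
  · simp only [hs, Nat.add_sub_cancel, Nat.add_one_ne_zero, if_false, w]
    push_cast
    ring

section

variable {V : Type*} [AddCommGroup V] [Module ℝ V] (B : V →ₗ[ℝ] V →ₗ[ℝ] ℝ)

lemma apply_eq_chainGram {n : ℕ} {e : Fin n → V} (hdiag : ∀ i, B (e i) (e i) = -2)
    (hconsec : ∀ i i' : Fin n, ((i : ℕ) + 1 = i' ∨ (i' : ℕ) + 1 = i) → B (e i) (e i') = 1)
    (hfar : ∀ i i' : Fin n, i ≠ i' → ¬((i : ℕ) + 1 = i' ∨ (i' : ℕ) + 1 = i) →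
      B (e i) (e i') = 0)
    (i i' : Fin n) : B (e i) (e i') = chainGram n i i' := by
  simp only [chainGram, of_apply]
  split_ifs with hii' hadj
  · rw [hii', hdiag]
  · exact hconsec i i' hadj
  · exact hfar i i' hii' hadj

lemma apply_sum_chainWeight_smul {n : ℕ} {e : Fin n → V}
    (hgram : ∀ i i', B (e i) (e i') = chainGram n i i') (i : Fin n) :
    B (e i) (∑ i', chainWeight n i' • e i') = if (i : ℕ) = 0 then -((n : ℝ) + 1) else 0 := by
  rw [← chainGram_mulVec_chainWeight]
  simp only [map_sum, map_smul, hgram, smul_eq_mul, mulVec, dotProduct, mul_comm]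

lemma sum_mul_apply_eq_of_apply_first {n : ℕ} (hn : 0 < n) {x : V} {e : Fin n → V}
    (hfirst : B x (e ⟨0, hn⟩) = 1) (hrest : ∀ i : Fin n, (i : ℕ) ≠ 0 → B x (e i) = 0)
    (f : Fin n → ℝ) : ∑ i, f i * B x (e i) = f ⟨0, hn⟩ := by
  refine (Fintype.sum_eq_single _ fun i hi => ?_).trans (by rw [hfirst, mul_one])
  rw [hrest i fun h => hi (Fin.ext h), mul_zero]

lemma coeff_first_eq_of_forall_apply_eq_zero {m : ℕ} {k : Fin m → ℕ} (hk : ∀ j, 0 < k j)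
    {e : (j : Fin m) → Fin (k j) → V}
    (hgram : ∀ j i i', B (e j i) (e j i') = chainGram (k j) i i')
    (hcross : ∀ j j' (i : Fin (k j)) (i' : Fin (k j')), j ≠ j' → B (e j i) (e j' i') = 0)
    {ct : V} (hfirst : ∀ j, B ct (e j ⟨0, hk j⟩) = 1)
    (hrest : ∀ j (i : Fin (k j)), (i : ℕ) ≠ 0 → B ct (e j i) = 0)
    {a : (j : Fin m) → Fin (k j) → ℝ} {c : V} (hc : c = ct + ∑ j, ∑ i, a j i • e j i)
    (horth : ∀ j (i : Fin (k j)), B c (e j i) = 0) (j : Fin m) :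
    a j ⟨0, hk j⟩ = k j / (k j + 1) := by
  set w := ∑ i, chainWeight (k j) i • e j i
  have hw : ∀ i, B (e j i) w = if (i : ℕ) = 0 then -((k j : ℝ) + 1) else 0 :=
    apply_sum_chainWeight_smul B (hgram j)
  have hctw : B ct w = k j := by
    simpa [w, chainWeight, mul_comm] using
      sum_mul_apply_eq_of_apply_first B (hk j) (hfirst j) (hrest j) (chainWeight (k j))
  have hew : ∑ j', ∑ i', a j' i' * B (e j' i') w = -((k j : ℝ) + 1) * a j ⟨0, hk j⟩ := by
    rw [Fintype.sum_eq_single j fun j' hj' => sum_eq_zero fun i' _ => by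
      simp [w, hcross j' j i' _ hj']]
    rw [Fintype.sum_eq_single ⟨0, hk j⟩ fun i hi => by
      rw [hw, if_neg fun h => hi (Fin.ext h), mul_zero], hw, if_pos rfl, mul_comm]
  have hcw : B c w = 0 := by simp [w, horth]
  rw [hc] at hcw
  simp only [map_add, map_sum, map_smul, LinearMap.add_apply, LinearMap.sum_apply,
    LinearMap.smul_apply, smul_eq_mul, hctw, hew] at hcw
  have hk1 : (k j : ℝ) + 1 ≠ 0 := by positivity
  field_simp
  linarith

end

/-- Pullback self-intersection formula in the Du Val `A_k`-chain case: if the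
Gram matrix of the vectors `e j i` is block diagonal with `A_{k_j}` blocks,
`ct` pairs to `1` with the first vector of each chain and to `0` with all
other `e j i`, and `c = ct + Σ a_{ji} e_{ji}` is orthogonal to all `e j i`,
then `B(c, c) = B(ct, ct) + Σ_j k_j/(k_j + 1)`. -/
theorem pullback_self_intersection_Ak {V : Type*} [AddCommGroup V] [Module ℝ V]
    (B : V →ₗ[ℝ] V →ₗ[ℝ] ℝ) (hB : ∀ x y, B x y = B y x)
    (m : ℕ) (k : Fin m → ℕ) (hk : ∀ j, 0 < k j)
    (e : (j : Fin m) → Fin (k j) → V)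
    (hdiag : ∀ j i, B (e j i) (e j i) = -2)
    (hconsec : ∀ j (i i' : Fin (k j)),
      ((i : ℕ) + 1 = (i' : ℕ) ∨ (i' : ℕ) + 1 = (i : ℕ)) → B (e j i) (e j i') = 1)
    (hfar : ∀ j (i i' : Fin (k j)), i ≠ i' →
      ¬((i : ℕ) + 1 = (i' : ℕ) ∨ (i' : ℕ) + 1 = (i : ℕ)) → B (e j i) (e j i') = 0)
    (hcross : ∀ j j' (i : Fin (k j)) (i' : Fin (k j')), j ≠ j' →
      B (e j i) (e j' i') = 0)
    (ct : V)
    (hfirst : ∀ j, B ct (e j ⟨0, hk j⟩) = 1)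
    (hrest : ∀ j (i : Fin (k j)), (i : ℕ) ≠ 0 → B ct (e j i) = 0)
    (a : (j : Fin m) → Fin (k j) → ℝ)
    (c : V) (hc : c = ct + ∑ j, ∑ i, a j i • e j i)
    (horth : ∀ j (i : Fin (k j)), B c (e j i) = 0) :
    B c c = B ct ct + ∑ j, (k j : ℝ) / (k j + 1) := by
  have hgram j := apply_eq_chainGram B (hdiag j) (hconsec j) (hfar j)
  calc B c c = B c ct := by
        nth_rw 2 [hc]
        simp [horth]
    _ = B ct c := hB c ct
    _ = B ct ct + ∑ j, a j ⟨0, hk j⟩ := by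
        simp [hc, sum_mul_apply_eq_of_apply_first B (hk _) (hfirst _) (hrest _)]
    _ = B ct ct + ∑ j, (k j : ℝ) / (k j + 1) := by
        simp only [coeff_first_eq_of_forall_apply_eq_zero B hk hgram hcross hfirst hrest hc horth]
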